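/- arXiv:2508.16923 — 8 statements merged into one kernel-verified Lean document; each statement's English description precedes it below -/
import Mathlib

section
/- Let E be a vector lattice with the projection property and let x, y ∈ E. Then E decomposes as the direct sum of the band generated by (y−x)⁺, the band generated by (x−y)⁺, and the band B_{x=y} := ((x−y)⁺)ᵈ ∩ ((y−x)⁺)ᵈ (where Bᵈ denotes the disjoint complement). -/
/-!
The positive parts `(y - x)⁺` and `(x - y)⁺ = (y - x)⁻` are disjoint, so the band generated by
one lies in the disjoint complement of the other. Projecting first onto `B_{x<y}` and then the
remainder onto `B_{y<x}` leaves a component in both disjoint complements; uniqueness holds because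
a band meets its disjoint complement only in `0`.
-/

variable {E : Type*}

section Defs
variable [Lattice E] [AddCommGroup E] [CovariantClass E E (· + ·) (· ≤ ·)]

/-- The disjoint complement of a set. -/
def dComp (A : Set E) : Set E := {x | ∀ a ∈ A, |x| ⊓ |a| = 0}

/-- A band (in a space with the projection property) is a set equal to its double
disjoint complement. -/
def IsBand (B : Set E) : Prop := dComp (dComp B) = B

/-- The band generated by an element. -/
def bandGen (u : E) : Set E := dComp (dComp ({u} : Set E))

/-- `P` is the band projection onto `B`: every `x` decomposes as `P x ∈ B` plus
`x - P x ∈ Bᵈ`. -/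
def IsBandProjection (B : Set E) (P : E → E) : Prop :=
  (∀ x, P x ∈ B) ∧ (∀ x, x - P x ∈ dComp B)

/-- `u` is a weak order unit of the band `B`. -/
def IsWeakUnitOf (B : Set E) (u : E) : Prop :=
  u ∈ B ∧ 0 ≤ u ∧ ∀ z ∈ B, u ⊓ |z| = 0 → z = 0

/-- `u` is a weak order unit of `E`. -/
def IsWeakUnit (u : E) : Prop := 0 ≤ u ∧ ∀ z : E, u ⊓ |z| = 0 → z = 0

end Defs

section DisjointComplement
variable [Lattice E] [AddCommGroup E]

lemma dComp_anti {A B : Set E} (h : A ⊆ B) : dComp B ⊆ dComp A :=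
  fun _ hx a ha => hx a (h ha)

lemma subset_dComp_dComp (A : Set E) : A ⊆ dComp (dComp A) :=
  fun a ha x hx => inf_comm |a| |x| ▸ hx a ha

lemma dComp_dComp_dComp (A : Set E) : dComp (dComp (dComp A)) = dComp A :=
  subset_antisymm (dComp_anti (subset_dComp_dComp A)) (subset_dComp_dComp (dComp A))

lemma isBand_dComp (A : Set E) : IsBand (dComp A) :=
  dComp_dComp_dComp A

lemma dComp_bandGen (u : E) : dComp (bandGen u) = dComp ({u} : Set E) :=
  dComp_dComp_dComp {u}

lemma neg_mem_dComp {A : Set E} {x : E} (h : x ∈ dComp A) : -x ∈ dComp A :=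
  fun a ha => abs_neg x ▸ h a ha

variable [CovariantClass E E (· + ·) (· ≤ ·)]

lemma add_inf_eq_zero {a b c : E} (ha : 0 ≤ a) (hb : 0 ≤ b) (hc : 0 ≤ c)
    (hac : a ⊓ c = 0) (hbc : b ⊓ c = 0) : (a + b) ⊓ c = 0 := by
  refine le_antisymm ?_ (le_inf (add_nonneg ha hb) hc)
  have hle_b : (a + b) ⊓ c ≤ b :=
    calc (a + b) ⊓ c ≤ (a + b) ⊓ (c + b) := inf_le_inf_left _ (le_add_of_nonneg_right hb)
      _ = a ⊓ c + b := (inf_add a c b).symm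
      _ = b := by rw [hac, zero_add]
  exact hbc ▸ le_inf hle_b inf_le_right

lemma add_mem_dComp {A : Set E} {x y : E} (hx : x ∈ dComp A) (hy : y ∈ dComp A) :
    x + y ∈ dComp A := by
  intro a ha
  refine le_antisymm ?_ (le_inf (abs_nonneg _) (abs_nonneg _))
  calc |x + y| ⊓ |a| ≤ (|x| + |y|) ⊓ |a| := inf_le_inf_right _ (abs_add_le x y)
    _ = 0 := add_inf_eq_zero (abs_nonneg x) (abs_nonneg y) (abs_nonneg a) (hx a ha) (hy a ha)

lemma sub_mem_dComp {A : Set E} {x y : E} (hx : x ∈ dComp A) (hy : y ∈ dComp A) :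
    x - y ∈ dComp A :=
  sub_eq_add_neg x y ▸ add_mem_dComp hx (neg_mem_dComp hy)

lemma eq_zero_of_mem_of_mem_dComp {A : Set E} {x : E} (hA : x ∈ A) (hd : x ∈ dComp A) :
    x = 0 := by
  have habs : |x| = 0 := inf_idem |x| ▸ hd x hA
  exact le_antisymm (habs ▸ le_abs_self x) (neg_nonpos.mp (habs ▸ neg_le_abs x))

lemma IsBand.sub_mem {B : Set E} (hB : IsBand B) {x y : E} (hx : x ∈ B) (hy : y ∈ B) :
    x - y ∈ B := by
  rw [← hB] at hx hy ⊢
  exact sub_mem_dComp hx hy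

lemma IsBand.eq_of_add_eq_add {B : Set E} (hB : IsBand B) {a a' b b' : E}
    (ha : a ∈ B) (ha' : a' ∈ B) (hb : b ∈ dComp B) (hb' : b' ∈ dComp B)
    (h : a + b = a' + b') : a = a' := by
  have hdiff : a - a' = b' - b := by rw [sub_eq_sub_iff_add_eq_add, h, add_comm]
  exact sub_eq_zero.mp <|
    eq_zero_of_mem_of_mem_dComp (hB.sub_mem ha ha') (hdiff ▸ sub_mem_dComp hb' hb)

lemma bandGen_subset_dComp_bandGen {u v : E} (hu : 0 ≤ u) (hv : 0 ≤ v) (huv : u ⊓ v = 0) :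
    bandGen v ⊆ dComp (bandGen u) := by
  rw [dComp_bandGen]
  refine dComp_anti ?_
  rintro _ rfl _ rfl
  rwa [abs_of_nonneg hu, abs_of_nonneg hv]

lemma posPart_sub_inf_posPart_sub (x y : E) : ((y - x) ⊔ 0) ⊓ ((x - y) ⊔ 0) = 0 := by
  simpa only [posPart_def, negPart_def, neg_sub] using posPart_inf_negPart_eq_zero (y - x)

end DisjointComplement

section ThreeBands
variable [Lattice E] [AddCommGroup E] [CovariantClass E E (· + ·) (· ≤ ·)]
variable {B₁ B₂ : Set E}

lemma exists_decomposition_of_isBandProjection (h₂₁ : B₂ ⊆ dComp B₁) {P Q : E → E}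
    (hP : IsBandProjection B₁ P) (hQ : IsBandProjection B₂ Q) (z : E) :
    ∃ t : E × E × E, t.1 ∈ B₁ ∧ t.2.1 ∈ B₂ ∧ t.2.2 ∈ dComp B₂ ∩ dComp B₁ ∧
      z = t.1 + t.2.1 + t.2.2 := by
  set r := z - P z
  refine ⟨(P z, Q r, r - Q r), hP.1 z, hQ.1 r, ⟨hQ.2 r, ?_⟩, ?_⟩
  · exact sub_mem_dComp (hP.2 z) (h₂₁ (hQ.1 r))
  · simp only [r]
    abel

lemma decomposition_unique (h₁ : IsBand B₁) (h₂ : IsBand B₂) (h₂₁ : B₂ ⊆ dComp B₁)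
    {s t : E × E × E}
    (hs : s.1 ∈ B₁ ∧ s.2.1 ∈ B₂ ∧ s.2.2 ∈ dComp B₂ ∩ dComp B₁)
    (ht : t.1 ∈ B₁ ∧ t.2.1 ∈ B₂ ∧ t.2.2 ∈ dComp B₂ ∩ dComp B₁)
    (hst : s.1 + s.2.1 + s.2.2 = t.1 + t.2.1 + t.2.2) : s = t := by
  obtain ⟨s₁, s₂, s₃⟩ := s
  obtain ⟨t₁, t₂, t₃⟩ := t
  obtain ⟨hs₁, hs₂, hs₃₂, hs₃₁⟩ := hs
  obtain ⟨ht₁, ht₂, ht₃₂, ht₃₁⟩ := ht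
  simp only [add_assoc] at hst
  have e₁ : s₁ = t₁ := h₁.eq_of_add_eq_add hs₁ ht₁
    (add_mem_dComp (h₂₁ hs₂) hs₃₁) (add_mem_dComp (h₂₁ ht₂) ht₃₁) hst
  rw [e₁, add_right_inj] at hst
  have e₂ : s₂ = t₂ := h₂.eq_of_add_eq_add hs₂ ht₂ hs₃₂ ht₃₂ hst
  rw [e₂, add_right_inj] at hst
  rw [e₁, e₂, hst]

end ThreeBands

theorem stmt0_general [Lattice E] [AddCommGroup E] [CovariantClass E E (· + ·) (· ≤ ·)]
    (hpp : ∀ B : Set E, IsBand B → ∃ P : E → E, IsBandProjection B P)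
    (x y : E) :
    (∀ b₁ ∈ bandGen ((y - x) ⊔ 0), ∀ b₂ ∈ bandGen ((x - y) ⊔ 0), |b₁| ⊓ |b₂| = 0) ∧
    (∀ b₁ ∈ bandGen ((y - x) ⊔ 0),
      ∀ b₃ ∈ dComp (bandGen ((x - y) ⊔ 0)) ∩ dComp (bandGen ((y - x) ⊔ 0)),
        |b₁| ⊓ |b₃| = 0) ∧
    (∀ b₂ ∈ bandGen ((x - y) ⊔ 0),
      ∀ b₃ ∈ dComp (bandGen ((x - y) ⊔ 0)) ∩ dComp (bandGen ((y - x) ⊔ 0)),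
        |b₂| ⊓ |b₃| = 0) ∧
    (∀ z : E, ∃! t : E × E × E,
      t.1 ∈ bandGen ((y - x) ⊔ 0) ∧ t.2.1 ∈ bandGen ((x - y) ⊔ 0) ∧
      t.2.2 ∈ dComp (bandGen ((x - y) ⊔ 0)) ∩ dComp (bandGen ((y - x) ⊔ 0)) ∧
      z = t.1 + t.2.1 + t.2.2) := by
  set u := (y - x) ⊔ 0
  set v := (x - y) ⊔ 0
  have hvu : bandGen v ⊆ dComp (bandGen u) :=
    bandGen_subset_dComp_bandGen le_sup_right le_sup_right (posPart_sub_inf_posPart_sub x y)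
  refine ⟨fun b₁ h₁ b₂ h₂ => inf_comm |b₂| |b₁| ▸ hvu h₂ b₁ h₁,
    fun b₁ h₁ b₃ h₃ => inf_comm |b₃| |b₁| ▸ h₃.2 b₁ h₁,
    fun b₂ h₂ b₃ h₃ => inf_comm |b₃| |b₂| ▸ h₃.1 b₂ h₂, fun z => ?_⟩
  obtain ⟨P, hP⟩ := hpp (bandGen u) (isBand_dComp _)
  obtain ⟨Q, hQ⟩ := hpp (bandGen v) (isBand_dComp _)
  obtain ⟨t, ht₁, ht₂, ht₃, hzt⟩ := exists_decomposition_of_isBandProjection hvu hP hQ z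
  refine ⟨t, ⟨ht₁, ht₂, ht₃, hzt⟩, fun s ⟨hs₁, hs₂, hs₃, hzs⟩ => ?_⟩
  exact decomposition_unique (isBand_dComp _) (isBand_dComp _) hvu ⟨hs₁, hs₂, hs₃⟩
    ⟨ht₁, ht₂, ht₃⟩ (hzs ▸ hzt)

/-- band decomposition `E = B_{x<y} ⊕ B_{y<x} ⊕ B_{x=y}`. -/
theorem stmt0 [Lattice E] [AddCommGroup E] [CovariantClass E E (· + ·) (· ≤ ·)]
    [Module ℝ E] [PosSMulMono ℝ E]
    (hpp : ∀ B : Set E, IsBand B → ∃ P : E → E, IsBandProjection B P)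
    (x y : E) :
    (∀ b₁ ∈ bandGen ((y - x) ⊔ 0), ∀ b₂ ∈ bandGen ((x - y) ⊔ 0), |b₁| ⊓ |b₂| = 0) ∧
    (∀ b₁ ∈ bandGen ((y - x) ⊔ 0),
      ∀ b₃ ∈ dComp (bandGen ((x - y) ⊔ 0)) ∩ dComp (bandGen ((y - x) ⊔ 0)),
        |b₁| ⊓ |b₃| = 0) ∧
    (∀ b₂ ∈ bandGen ((x - y) ⊔ 0),
      ∀ b₃ ∈ dComp (bandGen ((x - y) ⊔ 0)) ∩ dComp (bandGen ((y - x) ⊔ 0)),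
        |b₂| ⊓ |b₃| = 0) ∧
    (∀ z : E, ∃! t : E × E × E,
      t.1 ∈ bandGen ((y - x) ⊔ 0) ∧ t.2.1 ∈ bandGen ((x - y) ⊔ 0) ∧
      t.2.2 ∈ dComp (bandGen ((x - y) ⊔ 0)) ∩ dComp (bandGen ((y - x) ⊔ 0)) ∧
      z = t.1 + t.2.1 + t.2.2) :=
  stmt0_general hpp x y
end

section
/- Let E be a vector lattice with the projection property and x, y ∈ E. The band B_{x=y} := ((x−y)⁺)ᵈ ∩ ((y−x)⁺)ᵈ is the largest band whose band projection P satisfies P(x) = P(y); that is, if B is any band whose projection P satisfies P(x) = P(y), then B ⊆ B_{x=y}. -/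
/-! If `P x = P y`, then `x - y = (x - P x) - (y - P y)` is a difference of two elements
of `Bᵈ`. A disjoint complement is a solid subgroup, so `(x - y)⁺` and `(y - x)⁺` lie in `Bᵈ`,
and hence `B` is disjoint from the bands they generate. -/

variable {E : Type*}

section Disjointness
variable [Lattice E] [AddCommGroup E]

lemma subset_dComp_bandGen {B : Set E} {u : E} (hu : u ∈ dComp B) :
    B ⊆ dComp (bandGen u) := by
  intro b hb a ha
  rw [inf_comm]
  refine ha b fun u' hu' => ?_
  rw [Set.mem_singleton_iff.mp hu', inf_comm]
  exact hu b hb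

variable [AddLeftMono E]

lemma add_inf_le_inf_add_inf {a b c : E} (ha : 0 ≤ a) (hb : 0 ≤ b) (hc : 0 ≤ c) :
    (a + b) ⊓ c ≤ a ⊓ c + b ⊓ c := by
  have hb' : (a + b) ⊓ c ≤ a ⊓ c + b := by
    calc (a + b) ⊓ c ≤ (a + b) ⊓ (c + b) := inf_le_inf_left _ (le_add_of_nonneg_right hb)
      _ = a ⊓ c + b := (inf_add a c b).symm
  have hc' : (a + b) ⊓ c ≤ a ⊓ c + c :=
    inf_le_right.trans (le_add_of_nonneg_left (le_inf ha hc))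
  calc (a + b) ⊓ c ≤ (a ⊓ c + b) ⊓ (a ⊓ c + c) := le_inf hb' hc'
    _ = a ⊓ c + b ⊓ c := (add_inf b c (a ⊓ c)).symm

lemma mem_dComp_of_abs_le {A : Set E} {v w : E} (hv : v ∈ dComp A) (hwv : |w| ≤ |v|) :
    w ∈ dComp A := fun a ha =>
  le_antisymm ((inf_le_inf_right _ hwv).trans_eq (hv a ha)) (le_inf (abs_nonneg w) (abs_nonneg a))

lemma sub_mem_dComp_s3 {A : Set E} {v w : E} (hv : v ∈ dComp A) (hw : w ∈ dComp A) :
    v - w ∈ dComp A := by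
  intro a ha
  have hvw : |v - w| ≤ |v| + |w| := by
    simpa only [sub_eq_add_neg, abs_neg] using abs_add_le v (-w)
  refine le_antisymm ?_ (le_inf (abs_nonneg _) (abs_nonneg a))
  calc |v - w| ⊓ |a| ≤ (|v| + |w|) ⊓ |a| := inf_le_inf_right _ hvw
    _ ≤ |v| ⊓ |a| + |w| ⊓ |a| :=
      add_inf_le_inf_add_inf (abs_nonneg v) (abs_nonneg w) (abs_nonneg a)
    _ = 0 := by rw [hv a ha, hw a ha, add_zero]

lemma sup_zero_mem_dComp {A : Set E} {v : E} (hv : v ∈ dComp A) : v ⊔ 0 ∈ dComp A :=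
  mem_dComp_of_abs_le hv <| by
    rw [abs_of_nonneg le_sup_right]
    exact sup_le (le_abs_self v) (abs_nonneg v)

lemma sub_mem_dComp_of_apply_eq {B : Set E} {P : E → E} (hP : IsBandProjection B P) {x y : E}
    (h : P x = P y) : x - y ∈ dComp B := by
  have hsub := sub_mem_dComp_s3 (hP.2 x) (hP.2 y)
  rwa [h, sub_sub_sub_cancel_right] at hsub

end Disjointness

theorem stmt3_general [Lattice E] [AddCommGroup E] [CovariantClass E E (· + ·) (· ≤ ·)]
    (x y : E) (B : Set E) (P : E → E)
    (hP : IsBandProjection B P) (h : P x = P y) :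
    B ⊆ dComp (bandGen ((x - y) ⊔ 0)) ∩ dComp (bandGen ((y - x) ⊔ 0)) := by
  have hxy := sub_mem_dComp_of_apply_eq hP h
  have hyx : y - x ∈ dComp B := mem_dComp_of_abs_le hxy (abs_sub_comm y x).le
  exact Set.subset_inter (subset_dComp_bandGen (sup_zero_mem_dComp hxy))
    (subset_dComp_bandGen (sup_zero_mem_dComp hyx))

/-- `B_{x=y}` is the largest band whose projection `P` satisfies
`P x = P y`. -/
theorem stmt3 [Lattice E] [AddCommGroup E] [CovariantClass E E (· + ·) (· ≤ ·)]
    [Module ℝ E] [PosSMulMono ℝ E]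
    (hpp : ∀ B : Set E, IsBand B → ∃ P : E → E, IsBandProjection B P)
    (x y : E) (B : Set E) (P : E → E)
    (hB : IsBand B) (hP : IsBandProjection B P) (h : P x = P y) :
    B ⊆ dComp (bandGen ((x - y) ⊔ 0)) ∩ dComp (bandGen ((y - x) ⊔ 0)) :=
  stmt3_general x y B P hP h
end

section
/- Let E be an Archimedean Φ-algebra (f-algebra with multiplicative unit e) and B a projection band with projection P. Then for all x, y ∈ E: P(xy) = P(x)P(y) = P(x)y = P(y)x. -/
/-!
In an f-algebra disjoint elements have zero product and `|a * b| ≤ |a| * |b|`, so the disjoint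
complement of any set is closed under multiplication by arbitrary elements. Writing
`x = P x + x'` and `y = P y + y'` with `x', y' ∈ Bᵈ`, the cross terms `P x * y'` and `P y * x'`
vanish, hence `x * y = P x * P y + x' * y'` with `P x * P y ∈ Bᵈᵈ = B` and `x' * y' ∈ Bᵈ`.
Uniqueness of the decomposition `E = B ⊕ Bᵈ` gives `P (x * y) = P x * P y`, and the vanishing
cross terms give the other two identities.
-/

variable {E : Type*}

lemma inf_eq_zero_of_le_of_inf_eq_zero [Lattice E] [Zero E] {a b c : E} (hb : 0 ≤ b)
    (ha : 0 ≤ a) (hbc : b ≤ c) (hc : c ⊓ a = 0) : b ⊓ a = 0 :=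
  le_antisymm (hc ▸ inf_le_inf_right a hbc) (le_inf hb ha)

section LatticeOrderedAddCommGroup
variable [Lattice E] [AddCommGroup E] [AddLeftMono E]

lemma eq_zero_of_abs_le_zero {a : E} (h : |a| ≤ 0) : a = 0 :=
  le_antisymm ((le_abs_self a).trans h) (neg_nonpos.mp ((neg_le_abs a).trans h))

lemma add_inf_eq_zero_s7 {u v a : E} (hu : 0 ≤ u) (hv : 0 ≤ v) (ha : 0 ≤ a)
    (hua : u ⊓ a = 0) (hva : v ⊓ a = 0) : (u + v) ⊓ a = 0 := by
  have key : (u + v) ⊓ a ≤ u ⊓ a + v ⊓ a := by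
    rw [add_inf, inf_add, inf_add]
    refine le_inf (le_inf inf_le_left ?_) (le_inf ?_ ?_)
    · exact inf_le_right.trans (le_add_of_nonneg_right hv)
    · exact inf_le_right.trans (le_add_of_nonneg_left hu)
    · exact inf_le_right.trans (le_add_of_nonneg_left ha)
  rw [hua, hva, add_zero] at key
  exact le_antisymm key (le_inf (add_nonneg hu hv) ha)

lemma sub_mem_dComp_s7 {A : Set E} {a b : E} (ha : a ∈ dComp A) (hb : b ∈ dComp A) :
    a - b ∈ dComp A := by
  intro c hc
  have hab : |a - b| ≤ |a| + |b| := by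
    simpa only [sub_eq_add_neg, abs_neg] using abs_add_le a (-b)
  exact inf_eq_zero_of_le_of_inf_eq_zero (abs_nonneg _) (abs_nonneg c) hab
    (add_inf_eq_zero_s7 (abs_nonneg a) (abs_nonneg b) (abs_nonneg c) (ha c hc) (hb c hc))

lemma eq_zero_of_mem_of_mem_dComp_s7 {A : Set E} {a : E} (ha : a ∈ A) (ha' : a ∈ dComp A) :
    a = 0 :=
  eq_zero_of_abs_le_zero (inf_idem |a| ▸ (ha' a ha).le)

lemma IsBandProjection.apply_add_eq {B : Set E} {P : E → E} (hB : IsBand B)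
    (hP : IsBandProjection B P) {b d : E} (hb : b ∈ B) (hd : d ∈ dComp B) :
    P (b + d) = b := by
  have hB' : P (b + d) - b ∈ B := by
    have hPbd := hP.1 (b + d)
    rw [← hB] at hb hPbd ⊢
    exact sub_mem_dComp_s7 hPbd hb
  have hBd : P (b + d) - b ∈ dComp B := by
    have hsplit : P (b + d) - b = d - (b + d - P (b + d)) := by abel
    exact hsplit ▸ sub_mem_dComp_s7 hd (hP.2 (b + d))
  exact sub_eq_zero.mp (eq_zero_of_mem_of_mem_dComp_s7 hB' hBd)

end LatticeOrderedAddCommGroup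

section FAlgebra
variable [CommRing E] [Lattice E] [AddLeftMono E]

lemma abs_mul_le_abs_mul_abs (hmulpos : ∀ a b : E, 0 ≤ a → 0 ≤ b → 0 ≤ a * b) (a b : E) :
    |a * b| ≤ |a| * |b| := by
  have hpp := hmulpos _ _ (posPart_nonneg a) (posPart_nonneg b)
  have hpn := hmulpos _ _ (posPart_nonneg a) (negPart_nonneg b)
  have hnp := hmulpos _ _ (negPart_nonneg a) (posPart_nonneg b)
  have hnn := hmulpos _ _ (negPart_nonneg a) (negPart_nonneg b)
  rw [← posPart_add_negPart a, ← posPart_add_negPart b]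
  conv_lhs => rw [← posPart_sub_negPart a, ← posPart_sub_negPart b]
  refine abs_le'.mpr ⟨sub_nonneg.mp ?_, sub_nonneg.mp ?_⟩
  · have h : (a⁺ + a⁻) * (b⁺ + b⁻) - (a⁺ - a⁻) * (b⁺ - b⁻)
        = (a⁺ * b⁻ + a⁻ * b⁺) + (a⁺ * b⁻ + a⁻ * b⁺) := by ring
    rw [h]
    exact add_nonneg (add_nonneg hpn hnp) (add_nonneg hpn hnp)
  · have h : (a⁺ + a⁻) * (b⁺ + b⁻) - -((a⁺ - a⁻) * (b⁺ - b⁻))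
        = (a⁺ * b⁺ + a⁻ * b⁻) + (a⁺ * b⁺ + a⁻ * b⁻) := by ring
    rw [h]
    exact add_nonneg (add_nonneg hpp hnn) (add_nonneg hpp hnn)

lemma mul_eq_zero_of_abs_inf_abs_eq_zero (hmulpos : ∀ a b : E, 0 ≤ a → 0 ≤ b → 0 ≤ a * b)
    (hfalg : ∀ a b c : E, a ⊓ b = 0 → 0 ≤ c → (c * a) ⊓ b = 0) {a b : E}
    (h : |a| ⊓ |b| = 0) : a * b = 0 := by
  -- `|a| * |b|` is disjoint from `|b| * |a|` (apply `hfalg` twice), i.e. from itself.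
  have hba : |b| ⊓ (|b| * |a|) = 0 := by
    rw [inf_comm]; exact hfalg _ _ _ h (abs_nonneg b)
  have hself : (|a| * |b|) ⊓ (|b| * |a|) = 0 := hfalg _ _ _ hba (abs_nonneg a)
  rw [mul_comm |b|, inf_idem] at hself
  exact eq_zero_of_abs_le_zero (hself ▸ abs_mul_le_abs_mul_abs hmulpos a b)

lemma mul_eq_zero_of_mem_of_mem_dComp (hmulpos : ∀ a b : E, 0 ≤ a → 0 ≤ b → 0 ≤ a * b)
    (hfalg : ∀ a b c : E, a ⊓ b = 0 → 0 ≤ c → (c * a) ⊓ b = 0) {A : Set E} {a b : E}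
    (ha : a ∈ A) (hb : b ∈ dComp A) : a * b = 0 :=
  mul_eq_zero_of_abs_inf_abs_eq_zero hmulpos hfalg (inf_comm |b| |a| ▸ hb a ha)

lemma mul_mem_dComp (hmulpos : ∀ a b : E, 0 ≤ a → 0 ≤ b → 0 ≤ a * b)
    (hfalg : ∀ a b c : E, a ⊓ b = 0 → 0 ≤ c → (c * a) ⊓ b = 0) {A : Set E} {a : E}
    (ha : a ∈ dComp A) (c : E) : a * c ∈ dComp A := by
  intro z hz
  refine inf_eq_zero_of_le_of_inf_eq_zero (abs_nonneg _) (abs_nonneg z) ?_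
    (hfalg _ _ _ (ha z hz) (abs_nonneg c))
  rw [mul_comm |c|]
  exact abs_mul_le_abs_mul_abs hmulpos a c

end FAlgebra

theorem stmt7_general [CommRing E] [Lattice E] [CovariantClass E E (· + ·) (· ≤ ·)]
    (hmulpos : ∀ a b : E, 0 ≤ a → 0 ≤ b → 0 ≤ a * b)
    (hfalg : ∀ a b c : E, a ⊓ b = 0 → 0 ≤ c → (c * a) ⊓ b = 0)
    (B : Set E) (P : E → E) (hB : IsBand B) (hP : IsBandProjection B P)
    (x y : E) :
    P (x * y) = P x * P y ∧ P (x * y) = P x * y ∧ P (x * y) = P y * x := by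
  have hx : P x * (y - P y) = 0 :=
    mul_eq_zero_of_mem_of_mem_dComp hmulpos hfalg (hP.1 x) (hP.2 y)
  have hy : P y * (x - P x) = 0 :=
    mul_eq_zero_of_mem_of_mem_dComp hmulpos hfalg (hP.1 y) (hP.2 x)
  have hxy : P (x * y) = P x * P y := by
    have hdecomp : x * y = P x * P y + (x - P x) * (y - P y) := by
      linear_combination hx + hy
    have hB_mul : P x * P y ∈ B := by
      have hPx := hP.1 x
      rw [← hB] at hPx ⊢
      exact mul_mem_dComp hmulpos hfalg hPx (P y)
    rw [hdecomp]
    exact hP.apply_add_eq hB hB_mul (mul_mem_dComp hmulpos hfalg (hP.2 x) (y - P y))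
  refine ⟨hxy, ?_, ?_⟩ <;> rw [hxy]
  · linear_combination -hx
  · linear_combination -hy

/-- in an Archimedean Φ-algebra, band projections satisfy
`P (x*y) = P x * P y = P x * y = P y * x`. -/
theorem stmt7 [CommRing E] [Lattice E] [CovariantClass E E (· + ·) (· ≤ ·)]
    (hmulpos : ∀ a b : E, 0 ≤ a → 0 ≤ b → 0 ≤ a * b)
    (hfalg : ∀ a b c : E, a ⊓ b = 0 → 0 ≤ c → (c * a) ⊓ b = 0)
    (harch : ∀ x y : E, (∀ n : ℕ, n • x ≤ y) → x ≤ 0)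
    (B : Set E) (P : E → E) (hB : IsBand B) (hP : IsBandProjection B P)
    (x y : E) :
    P (x * y) = P x * P y ∧ P (x * y) = P x * y ∧ P (x * y) = P y * x :=
  stmt7_general hmulpos hfalg B P hB hP x y
end

section
/- Let E be an Archimedean Φ-algebra with unit e and B a projection band with projection P. Then B = P(e)·E, i.e., B equals the set {P(e)·x : x ∈ E}. -/
variable {E : Type*}

/-!
In an f-algebra, disjoint elements have zero product, and multiplying by `c ≥ 0` preserves
disjointness; together with `|a * b| ≤ |a| * |b|` this makes every band a ring ideal. Hence
`P 1 * x ∈ B` for all `x`, and for `b ∈ B` the element `1 - P 1 ∈ Bᵈ` is disjoint from `b`,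
so `b - P 1 * b = (1 - P 1) * b = 0`.
-/

namespace FAlgebra

variable [CommRing E] [Lattice E]

theorem mul_eq_zero_of_inf_eq_zero
    (hfalg : ∀ a b c : E, a ⊓ b = 0 → 0 ≤ c → (c * a) ⊓ b = 0)
    {a b : E} (ha : 0 ≤ a) (hb : 0 ≤ b) (hab : a ⊓ b = 0) : a * b = 0 := by
  -- multiplying the disjoint pair twice makes `a * b` disjoint from itself
  have hba : b ⊓ (b * a) = 0 := by rw [inf_comm]; exact hfalg a b b hab hb
  simpa only [mul_comm b a, inf_idem] using hfalg b (b * a) a hba ha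

variable [CovariantClass E E (· + ·) (· ≤ ·)]

theorem mul_le_abs_mul_abs (hmulpos : ∀ a b : E, 0 ≤ a → 0 ≤ b → 0 ≤ a * b) (x y : E) :
    x * y ≤ |x| * |y| := by
  have hcross : 0 ≤ x⁺ * y⁻ + x⁻ * y⁺ :=
    add_nonneg (hmulpos _ _ (posPart_nonneg x) (negPart_nonneg y))
      (hmulpos _ _ (negPart_nonneg x) (posPart_nonneg y))
  have hx := posPart_sub_negPart x
  have hy := posPart_sub_negPart y
  have hdiff : |x| * |y| - x * y = 2 * (x⁺ * y⁻ + x⁻ * y⁺) := by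
    rw [← posPart_add_negPart x, ← posPart_add_negPart y]
    linear_combination (y⁺ - y⁻) * hx + x * hy
  have : 0 ≤ |x| * |y| - x * y := by
    rw [hdiff, two_mul]
    exact add_nonneg hcross hcross
  exact sub_nonneg.1 this

theorem abs_mul_le (hmulpos : ∀ a b : E, 0 ≤ a → 0 ≤ b → 0 ≤ a * b) (a b : E) :
    |a * b| ≤ |a| * |b| := by
  refine abs_le'.2 ⟨mul_le_abs_mul_abs hmulpos a b, ?_⟩
  simpa only [abs_neg, neg_mul] using mul_le_abs_mul_abs hmulpos (-a) b

theorem mul_eq_zero_of_abs_inf_abs_eq_zero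
    (hmulpos : ∀ a b : E, 0 ≤ a → 0 ≤ b → 0 ≤ a * b)
    (hfalg : ∀ a b c : E, a ⊓ b = 0 → 0 ≤ c → (c * a) ⊓ b = 0)
    {a b : E} (hab : |a| ⊓ |b| = 0) : a * b = 0 := by
  have habs : |a| * |b| = 0 :=
    mul_eq_zero_of_inf_eq_zero hfalg (abs_nonneg a) (abs_nonneg b) hab
  have hle : |a * b| ≤ 0 := habs ▸ abs_mul_le hmulpos a b
  exact le_antisymm ((le_abs_self _).trans hle) (neg_nonpos.1 ((neg_le_abs _).trans hle))

theorem abs_mul_inf_eq_zero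
    (hmulpos : ∀ a b : E, 0 ≤ a → 0 ≤ b → 0 ≤ a * b)
    (hfalg : ∀ a b c : E, a ⊓ b = 0 → 0 ≤ c → (c * a) ⊓ b = 0)
    {p y : E} (hpy : |p| ⊓ |y| = 0) (x : E) : |p * x| ⊓ |y| = 0 := by
  have hle : |p * x| ⊓ |y| ≤ (|x| * |p|) ⊓ |y| := by
    gcongr
    rw [mul_comm p x]
    exact abs_mul_le hmulpos x p
  rw [hfalg _ _ _ hpy (abs_nonneg x)] at hle
  exact le_antisymm hle (le_inf (abs_nonneg _) (abs_nonneg _))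

theorem mul_mem_of_isBand
    (hmulpos : ∀ a b : E, 0 ≤ a → 0 ≤ b → 0 ≤ a * b)
    (hfalg : ∀ a b c : E, a ⊓ b = 0 → 0 ≤ c → (c * a) ⊓ b = 0)
    {B : Set E} (hB : IsBand B) {p : E} (hp : p ∈ B) (x : E) : p * x ∈ B := by
  rw [← hB]
  intro y hy
  exact abs_mul_inf_eq_zero hmulpos hfalg (by rw [inf_comm]; exact hy p hp) x

theorem bandProjection_one_mul_of_mem
    (hmulpos : ∀ a b : E, 0 ≤ a → 0 ≤ b → 0 ≤ a * b)
    (hfalg : ∀ a b c : E, a ⊓ b = 0 → 0 ≤ c → (c * a) ⊓ b = 0)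
    {B : Set E} {P : E → E} (hP : IsBandProjection B P) {b : E} (hb : b ∈ B) :
    P 1 * b = b := by
  have hzero : (1 - P 1) * b = 0 :=
    mul_eq_zero_of_abs_inf_abs_eq_zero hmulpos hfalg (hP.2 1 b hb)
  linear_combination -hzero

end FAlgebra

theorem stmt8_general [CommRing E] [Lattice E] [CovariantClass E E (· + ·) (· ≤ ·)]
    (hmulpos : ∀ a b : E, 0 ≤ a → 0 ≤ b → 0 ≤ a * b)
    (hfalg : ∀ a b c : E, a ⊓ b = 0 → 0 ≤ c → (c * a) ⊓ b = 0)
    (B : Set E) (P : E → E) (hB : IsBand B) (hP : IsBandProjection B P) :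
    B = Set.range (fun x : E => P 1 * x) := by
  ext b
  constructor
  · intro hb
    exact ⟨b, FAlgebra.bandProjection_one_mul_of_mem hmulpos hfalg hP hb⟩
  · rintro ⟨x, rfl⟩
    exact FAlgebra.mul_mem_of_isBand hmulpos hfalg hB (hP.1 1) x

/-- in an Archimedean Φ-algebra with unit `1`, a projection band
equals `P(1)·E`. -/
theorem stmt8 [CommRing E] [Lattice E] [CovariantClass E E (· + ·) (· ≤ ·)]
    (hmulpos : ∀ a b : E, 0 ≤ a → 0 ≤ b → 0 ≤ a * b)
    (hfalg : ∀ a b c : E, a ⊓ b = 0 → 0 ≤ c → (c * a) ⊓ b = 0)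
    (harch : ∀ x y : E, (∀ n : ℕ, n • x ≤ y) → x ≤ 0)
    (B : Set E) (P : E → E) (hB : IsBand B) (hP : IsBandProjection B P) :
    B = Set.range (fun x : E => P 1 * x) :=
  stmt8_general hmulpos hfalg B P hB hP
end

section
/- Let E be a vector lattice. A function f : D → E (with D ⊆ E) is order continuous at c ∈ D if and only if for every downward directed set Δ ⊆ E⁺ with infimum 0 there exists a set Ε ⊆ E⁺ with infimum 0 such that for every ε ∈ Ε there exists δ ∈ Δ satisfying: for all x ∈ D, |x − c| ≤ δ implies |f(x) − f(c)| ≤ ε. -/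
/-!
For the forward direction, index a net by the finite sets `t` of pairs `(δ, y)` with `δ ∈ Δ`,
`y ∈ D` and `|y - c| ≤ δ`, taking at `t` the point of the pair in `t` with strictly least `δ`
(and `c` if there is none); finite sets are used because the nets of the statement are indexed
by join-semilattices, which the directed preorder of pairs is not. This net order converges to
`c`. If `0 ∉ Δ`, the directed set `Δ` has no least element, so below any stage `s` there is
`δ ∈ Δ` strictly under every bound in `s`; each `y` within `δ` of `c` is then the value of the
net at `insert (δ, y) s`, which turns the eventual bounds of `f` along the net into `ε`-`δ`
bounds. Conversely, the eventual bounds of `|x α - c|` along a net converging to `c` form a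
downward directed set with infimum `0`, to which the `ε`-`δ` condition applies.
-/

variable {E : Type*}

section
universe u

/-- A net `x : ι → E` order converges to `l`: there is a set `Ε` with infimum `0`
such that for each `ε ∈ Ε` the net is eventually within `ε` of `l`. -/
def OrderConvNet {E : Type u} [Lattice E] [AddCommGroup E]
    [CovariantClass E E (· + ·) (· ≤ ·)] {ι : Type u} [Preorder ι]
    (x : ι → E) (l : E) : Prop :=
  ∃ Eps : Set E, IsGLB Eps 0 ∧
    ∀ ε ∈ Eps, ∃ α₀ : ι, ∀ α, α₀ ≤ α → |x α - l| ≤ ε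

theorem DirectedOn.exists_lt_of_isGLB_notMem {α ι : Type*} [PartialOrder α] {Δ : Set α} {a : α}
    (hdir : DirectedOn (· ≥ ·) Δ) (hne : Δ.Nonempty) (hglb : IsGLB Δ a) (ha : a ∉ Δ)
    (s : Finset ι) (g : ι → Δ) : ∃ δ ∈ Δ, ∀ i ∈ s, δ < g i := by
  classical
  have : Nonempty Δ := hne.to_subtype
  obtain ⟨δ₁, hδ₁⟩ := (directedOn_iff_directed.1 hdir).finset_le (s.image g)
  have hnot : δ₁.1 ∉ lowerBounds Δ := fun h =>
    ha (le_antisymm (hglb.2 h) (hglb.1 δ₁.2) ▸ δ₁.2)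
  obtain ⟨d, hd, hδ₁d⟩ := Set.not_subset.1 hnot
  obtain ⟨δ, hδ, hδδ₁, hδd⟩ := hdir δ₁ δ₁.2 d hd
  have hlt : δ < δ₁ := lt_of_le_not_ge hδδ₁ fun h => hδ₁d (h.trans hδd)
  exact ⟨δ, hδ, fun i hi => hlt.trans_le (hδ₁ (g i) (Finset.mem_image_of_mem g hi))⟩

theorem directedOn_ge_setOf_eventually_le {ι E : Type*} [SemilatticeInf E] (l : Filter ι)
    (g : ι → E) : DirectedOn (· ≥ ·) {d | ∀ᶠ i in l, g i ≤ d} :=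
  fun _ h₁ _ h₂ => ⟨_, (h₁.and h₂).mono fun _ h => le_inf h.1 h.2, inf_le_left, inf_le_right⟩

section StrictLeast

variable {P α β : Type*} [Preorder α] (key : P → α)

def IsStrictLeastIn (t : Finset P) (p : P) : Prop :=
  p ∈ t ∧ ∀ q ∈ t, q ≠ p → key p < key q

variable {key}

theorem IsStrictLeastIn.le {t : Finset P} {p q : P} (hp : IsStrictLeastIn key t p) (hq : q ∈ t) :
    key p ≤ key q := by
  by_cases h : q = p
  · rw [h]
  · exact (hp.2 q hq h).le

theorem IsStrictLeastIn.unique {t : Finset P} {p p' : P} (hp : IsStrictLeastIn key t p)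
    (hp' : IsStrictLeastIn key t p') : p = p' := by
  by_contra hne
  exact lt_asymm (hp.2 p' hp'.1 (Ne.symm hne)) (hp'.2 p hp.1 hne)

theorem isStrictLeastIn_insert [DecidableEq P] {t : Finset P} {p : P}
    (h : ∀ q ∈ t, key p < key q) : IsStrictLeastIn key (insert p t) p :=
  ⟨t.mem_insert_self p, fun q hq hqp => h q ((Finset.mem_insert.1 hq).resolve_left hqp)⟩

variable (key)

open Classical in
noncomputable def strictLeastVal (val : P → β) (b : β) (t : Finset P) : β :=
  if h : ∃ p, IsStrictLeastIn key t p then val h.choose else b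

variable {key} {val : P → β} {b : β} {t : Finset P}

theorem strictLeastVal_eq {p : P} (hp : IsStrictLeastIn key t p) :
    strictLeastVal key val b t = val p := by
  have h : ∃ p, IsStrictLeastIn key t p := ⟨p, hp⟩
  rw [strictLeastVal, dif_pos h, h.choose_spec.unique hp]

theorem strictLeastVal_induction {Q : β → Prop} (hb : Q b)
    (hval : ∀ p, IsStrictLeastIn key t p → Q (val p)) : Q (strictLeastVal key val b t) := by
  by_cases h : ∃ p, IsStrictLeastIn key t p
  · rw [strictLeastVal_eq h.choose_spec]
    exact hval _ h.choose_spec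
  · rwa [strictLeastVal, dif_neg h]

end StrictLeast

section BoundedPoint

variable {E : Type u} [Lattice E] [AddGroup E]

structure BoundedPoint (Δ D : Set E) (c : E) : Type u where
  bound : Δ
  point : D
  abs_sub_le : |(point : E) - c| ≤ bound

noncomputable def BoundedPoint.net (Δ D : Set E) (c : E) : Finset (BoundedPoint Δ D c) → E :=
  strictLeastVal (fun p : BoundedPoint Δ D c => (p.bound : E)) (fun p => p.point) c

theorem BoundedPoint.net_mem {Δ D : Set E} {c : E} (hc : c ∈ D)
    (t : Finset (BoundedPoint Δ D c)) :
    net Δ D c t ∈ D :=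
  strictLeastVal_induction (Q := (· ∈ D)) hc fun p _ => p.point.2

end BoundedPoint

section OrderContinuity

variable {E : Type u} [Lattice E] [AddCommGroup E] [CovariantClass E E (· + ·) (· ≤ ·)]

def OrderContinuousWithinAt (f : E → E) (D : Set E) (c : E) : Prop :=
  ∀ (ι : Type u) [Nonempty ι] [SemilatticeSup ι] (x : ι → E),
    (∀ α, x α ∈ D) → OrderConvNet x c → OrderConvNet (fun α => f (x α)) (f c)

theorem OrderConvNet.isGLB_setOf_eventually_le {ι : Type u} [Nonempty ι] [SemilatticeSup ι]
    {x : ι → E} {c : E} (hx : OrderConvNet x c) :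
    IsGLB {d | ∀ᶠ α in Filter.atTop, |x α - c| ≤ d} 0 := by
  obtain ⟨Eps, hEps, hev⟩ := hx
  refine ⟨fun d hd => ?_, fun b hb => hEps.2 fun ε hε => hb ?_⟩
  · obtain ⟨α, hα⟩ := hd.exists
    exact (abs_nonneg _).trans hα
  · exact Filter.eventually_atTop.2 (hev ε hε)

variable {f : E → E} {D : Set E} {c : E}

theorem orderContinuousWithinAt_of_epsDelta
    (h : ∀ Δ : Set E, DirectedOn (· ≥ ·) Δ → IsGLB Δ 0 →
      ∃ Eps : Set E, IsGLB Eps 0 ∧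
        ∀ ε ∈ Eps, ∃ δ ∈ Δ, ∀ x ∈ D, |x - c| ≤ δ → |f x - f c| ≤ ε) :
    OrderContinuousWithinAt f D c := by
  intro ι _ _ x hxD hx
  obtain ⟨Eps, hEps, hδ⟩ := h _ (directedOn_ge_setOf_eventually_le _ _)
    hx.isGLB_setOf_eventually_le
  refine ⟨Eps, hEps, fun ε hε => ?_⟩
  obtain ⟨δ, hδ, hfδ⟩ := hδ ε hε
  exact Filter.eventually_atTop.1 (hδ.mono fun α hα => hfδ _ (hxD α) hα)

theorem BoundedPoint.orderConvNet_net {Δ : Set E} (hglb : IsGLB Δ 0) (hc : c ∈ D) :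
    OrderConvNet (net Δ D c) c := by
  refine ⟨Δ, hglb, fun δ hδ => ?_⟩
  have hcδ : |c - c| ≤ δ := by simpa using hglb.1 hδ
  refine ⟨{⟨⟨δ, hδ⟩, ⟨c, hc⟩, hcδ⟩}, fun t ht => ?_⟩
  refine strictLeastVal_induction (Q := fun y => |y - c| ≤ δ) hcδ fun p hp => ?_
  exact p.abs_sub_le.trans (hp.le (ht (Finset.mem_singleton_self _)))

theorem OrderContinuousWithinAt.exists_epsDelta (H : OrderContinuousWithinAt f D c)
    (hc : c ∈ D) {Δ : Set E} (hdir : DirectedOn (· ≥ ·) Δ)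
    (hglb : IsGLB Δ 0) :
    ∃ Eps : Set E, IsGLB Eps 0 ∧
      ∀ ε ∈ Eps, ∃ δ ∈ Δ, ∀ x ∈ D, |x - c| ≤ δ → |f x - f c| ≤ ε := by
  classical
  by_cases hΔ : Δ.Nonempty ∧ (0 : E) ∉ Δ
  swap
  · refine ⟨Δ, hglb, fun ε hε => ⟨0, not_not.1 fun h0 => hΔ ⟨⟨ε, hε⟩, h0⟩, fun x _ hx => ?_⟩⟩
    have hxc : x = c := sub_eq_zero.1 <|
      le_antisymm ((le_abs_self _).trans hx) (neg_nonpos.1 ((neg_le_abs _).trans hx))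
    rw [hxc, sub_self, abs_zero]
    exact hglb.1 hε
  obtain ⟨Eps, hEps, hev⟩ :=
    H _ _ (BoundedPoint.net_mem hc) (BoundedPoint.orderConvNet_net hglb hc)
  refine ⟨Eps, hEps, fun ε hε => ?_⟩
  obtain ⟨s, hs⟩ := hev ε hε
  obtain ⟨δ, hδ, hlt⟩ := hdir.exists_lt_of_isGLB_notMem hΔ.1 hglb hΔ.2 s BoundedPoint.bound
  refine ⟨δ, hδ, fun y hy hyc => ?_⟩
  let p : BoundedPoint Δ D c := ⟨⟨δ, hδ⟩, ⟨y, hy⟩, hyc⟩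
  have hp : IsStrictLeastIn (fun q : BoundedPoint Δ D c => (q.bound : E)) (insert p s) p :=
    isStrictLeastIn_insert hlt
  simpa only [BoundedPoint.net, strictLeastVal_eq hp] using hs (insert p s) (s.subset_insert p)

end OrderContinuity

theorem stmt10_general {E : Type u} [Lattice E] [AddCommGroup E]
    [CovariantClass E E (· + ·) (· ≤ ·)]
    (D : Set E) (f : E → E) (c : E) (hc : c ∈ D) :
    (∀ (ι : Type u) [Nonempty ι] [SemilatticeSup ι] (x : ι → E),
        (∀ α, x α ∈ D) → OrderConvNet x c →
          OrderConvNet (fun α => f (x α)) (f c)) ↔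
    (∀ Δ : Set E, DirectedOn (· ≥ ·) Δ → IsGLB Δ 0 →
      ∃ Eps : Set E, IsGLB Eps 0 ∧
        ∀ ε ∈ Eps, ∃ δ ∈ Δ, ∀ x ∈ D, |x - c| ≤ δ → |f x - f c| ≤ ε) :=
  ⟨fun H _ hdir hglb => OrderContinuousWithinAt.exists_epsDelta H hc hdir hglb,
    orderContinuousWithinAt_of_epsDelta⟩

/-- ε-δ reformulation of order continuity at a point `c` of the
domain `D`. -/
theorem stmt10 {E : Type u} [Lattice E] [AddCommGroup E]
    [CovariantClass E E (· + ·) (· ≤ ·)] [Module ℝ E] [PosSMulMono ℝ E]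
    (D : Set E) (f : E → E) (c : E) (hc : c ∈ D) :
    (∀ (ι : Type u) [Nonempty ι] [SemilatticeSup ι] (x : ι → E),
        (∀ α, x α ∈ D) → OrderConvNet x c →
          OrderConvNet (fun α => f (x α)) (f c)) ↔
    (∀ Δ : Set E, DirectedOn (· ≥ ·) Δ → IsGLB Δ 0 →
      ∃ Eps : Set E, IsGLB Eps 0 ∧
        ∀ ε ∈ Eps, ∃ δ ∈ Δ, ∀ x ∈ D, |x - c| ≤ δ → |f x - f c| ≤ ε) :=
  stmt10_general D f c hc

end
end

section
/- In ℝ^ℕ (with pointwise order and multiplication), a function f : ℝ^ℕ → ℝ^ℕ is locally band preserving if and only if it is defined coordinatewise, i.e., there exist functions f_n : ℝ → ℝ such that f(x)(n) = f_n(x(n)) for all x ∈ ℝ^ℕ and n ∈ ℕ. -/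
/-!
A disjointness condition `|x - y| ⊓ |z| = 0` in `ℝ^ℕ` says exactly that at every coordinate
either `x` and `y` agree or `z` vanishes. Testing with `z` the `n`-th unit vector, local band
preservation becomes: `f x n` depends only on `x n`, which is the same as `f` acting
coordinatewise through `g n t := f (fun _ ↦ t) n`.
-/

section Coordinatewise

variable {ι β γ : Type*}

theorem forall_apply_eq_iff_exists_coordinatewise (f : (ι → β) → (ι → γ)) :
    (∀ x y i, x i = y i → f x i = f y i) ↔ ∃ g : ι → β → γ, ∀ x i, f x i = g i (x i) := by
  constructor
  · intro hf
    exact ⟨fun i t ↦ f (fun _ ↦ t) i, fun x i ↦ hf x (fun _ ↦ x i) i rfl⟩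
  · rintro ⟨g, hg⟩ x y i hxy
    rw [hg x, hg y, hxy]

end Coordinatewise

section Disjoint

variable {ι α : Type*} [AddCommGroup α] [LinearOrder α] [IsOrderedAddMonoid α]

theorem abs_inf_abs_eq_zero_iff {a b : α} : |a| ⊓ |b| = 0 ↔ a = 0 ∨ b = 0 := by
  rw [← abs_eq_zero (a := a), ← abs_eq_zero (a := b)]
  rcases le_total |a| |b| with hab | hba
  · rw [inf_eq_left.mpr hab]
    exact ⟨Or.inl, fun h ↦ h.elim id fun hb ↦ le_antisymm (hb ▸ hab) (abs_nonneg a)⟩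
  · rw [inf_eq_right.mpr hba]
    exact ⟨Or.inr, fun h ↦ h.elim (fun ha ↦ le_antisymm (ha ▸ hba) (abs_nonneg b)) id⟩

theorem Pi.abs_sub_inf_abs_eq_zero_iff {x y z : ι → α} :
    |x - y| ⊓ |z| = 0 ↔ ∀ i, x i = y i ∨ z i = 0 := by
  simp only [funext_iff, Pi.inf_apply, Pi.abs_apply, Pi.sub_apply, Pi.zero_apply,
    abs_inf_abs_eq_zero_iff, sub_eq_zero]

def IsLocallyBandPreserving (f : (ι → α) → (ι → α)) : Prop :=
  ∀ x y z, |x - y| ⊓ |z| = 0 → |f x - f y| ⊓ |z| = 0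

theorem isLocallyBandPreserving_iff_forall_apply_eq [Nontrivial α]
    (f : (ι → α) → (ι → α)) :
    IsLocallyBandPreserving f ↔ ∀ x y i, x i = y i → f x i = f y i := by
  classical
  simp only [IsLocallyBandPreserving, Pi.abs_sub_inf_abs_eq_zero_iff]
  constructor
  · intro hf x y i hxy
    obtain ⟨a, ha⟩ := exists_ne (0 : α)
    have hdisj : ∀ j, x j = y j ∨ (Pi.single i a : ι → α) j = 0 := fun j ↦ by
      rcases eq_or_ne j i with rfl | hji
      · exact Or.inl hxy
      · exact Or.inr (by simp [hji])
    simpa [ha] using hf x y _ hdisj i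
  · intro hf x y z hxyz i
    exact (hxyz i).imp_left (hf x y i)

end Disjoint

/-- a function on `ℝ^ℕ` is locally band preserving iff it is
defined coordinatewise. -/
theorem stmt14 (f : (ℕ → ℝ) → (ℕ → ℝ)) :
    (∀ x y z : ℕ → ℝ, |x - y| ⊓ |z| = 0 → |f x - f y| ⊓ |z| = 0) ↔
    (∃ g : ℕ → ℝ → ℝ, ∀ (x : ℕ → ℝ) (n : ℕ), f x n = g n (x n)) :=
  (isLocallyBandPreserving_iff_forall_apply_eq f).trans
    (forall_apply_eq_iff_exists_coordinatewise f)
end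

section
/- Consider the Dedekind complete Φ-algebra E = ℝ², and the function f : [(0,0),(1,1)] → ℝ² defined by f(x,y) = (x, x²). Then f is order continuous, f(0,0) = (0,0), f(1,1) = (1,1), and (1/2, 1/2) lies between f(0,0) and f(1,1), but there is no point c in the order interval [(0,0),(1,1)] with f(c) = (1/2, 1/2). (Hence the Intermediate Value Theorem fails for order continuous functions that are not locally band preserving.) -/
/-- in `ℝ²`, the order continuous function `f (x,y) = (x, x²)` on
`[(0,0),(1,1)]` satisfies `f (0,0) = (0,0)` and `f (1,1) = (1,1)`, the value
`(1/2, 1/2)` lies between them, yet is not attained: the Intermediate Value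
Theorem fails. -/
theorem stmt18 (f : ℝ × ℝ → ℝ × ℝ) (hf : ∀ p : ℝ × ℝ, f p = (p.1, p.1 ^ 2)) :
    ContinuousOn f (Set.Icc ((0 : ℝ), (0 : ℝ)) ((1 : ℝ), (1 : ℝ))) ∧
    f ((0 : ℝ), (0 : ℝ)) = ((0 : ℝ), (0 : ℝ)) ∧
    f ((1 : ℝ), (1 : ℝ)) = ((1 : ℝ), (1 : ℝ)) ∧
    ((1 / 2 : ℝ), (1 / 2 : ℝ)) ∈
      Set.Icc (f ((0 : ℝ), (0 : ℝ))) (f ((1 : ℝ), (1 : ℝ))) ∧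
    ¬ ∃ c ∈ Set.Icc ((0 : ℝ), (0 : ℝ)) ((1 : ℝ), (1 : ℝ)),
        f c = ((1 / 2 : ℝ), (1 / 2 : ℝ)) := by
  obtain rfl : f = fun p => (p.1, p.1 ^ 2) := funext hf
  refine ⟨by fun_prop, by norm_num, by norm_num, by norm_num [Prod.le_def], ?_⟩
  rintro ⟨c, -, hc⟩
  obtain ⟨hc₁, hc₂⟩ := Prod.mk.inj hc
  -- the first coordinate forces the second to be (1/2)^2 = 1/4
  rw [hc₁] at hc₂
  norm_num at hc₂
end

section
/- Consider the Dedekind complete Φ-algebra E = ℝ² and g : [(0,0),(1,1)] → ℝ² given by g(x,y) = (x, 1−x). Then g is order continuous and order bounded, sup{g(x,y) : (x,y) ∈ [(0,0),(1,1)]} = (1,1), but there is no point in the domain at which g attains the value (1,1). (Hence the Extreme Value Theorem fails for order continuous functions that are not locally band preserving.) -/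
/-!
The map `(x, y) ↦ (x, 1 - x)` sends the unit square into itself, and its image contains `(1, 0)`
and `(0, 1)`, whose componentwise supremum is `(1, 1)`; so `(1, 1)` is the least upper bound of the
image. It is not attained, since `x = 1` and `1 - x = 1` are incompatible.
-/

open Set

theorem isLUB_sup_of_mem_of_subset_Iic {α : Type*} [SemilatticeSup α] {s : Set α} {a b : α}
    (ha : a ∈ s) (hb : b ∈ s) (hs : s ⊆ Iic (a ⊔ b)) : IsLUB s (a ⊔ b) :=
  isLUB_pair.of_subset_of_superset isLUB_Iic (pair_subset ha hb) hs

theorem mapsTo_fst_one_sub_Icc {α : Type*} [Ring α] [PartialOrder α] [IsOrderedRing α] :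
    MapsTo (fun p : α × α => (p.1, 1 - p.1)) (Icc 0 1) (Icc 0 1) := fun p hp =>
  have hp₁ : p.1 ∈ Icc 0 1 := ⟨hp.1.1, hp.2.1⟩
  have hq₁ : 1 - p.1 ∈ Icc 0 1 := Set.Icc.one_sub_mem hp₁
  ⟨⟨hp₁.1, hq₁.1⟩, ⟨hp₁.2, hq₁.2⟩⟩

theorem fst_one_sub_ne_one {α : Type*} [Ring α] [Nontrivial α] (x : α) : (x, 1 - x) ≠ 1 := by
  intro h
  have hx : x = 1 := congrArg Prod.fst h
  have hy : 1 - x = 1 := congrArg Prod.snd h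
  rw [hx, sub_self] at hy
  exact zero_ne_one hy

/-- in `ℝ²`, the order continuous, order bounded function
`g (x,y) = (x, 1 - x)` on `[(0,0),(1,1)]` has supremum `(1,1)` over the
interval, but never attains it: the Extreme Value Theorem fails. -/
theorem stmt19 (g : ℝ × ℝ → ℝ × ℝ) (hg : ∀ p : ℝ × ℝ, g p = (p.1, 1 - p.1)) :
    ContinuousOn g (Set.Icc ((0 : ℝ), (0 : ℝ)) ((1 : ℝ), (1 : ℝ))) ∧
    (∃ m M : ℝ × ℝ, ∀ p ∈ Set.Icc ((0 : ℝ), (0 : ℝ)) ((1 : ℝ), (1 : ℝ)),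
      m ≤ g p ∧ g p ≤ M) ∧
    IsLUB (g '' Set.Icc ((0 : ℝ), (0 : ℝ)) ((1 : ℝ), (1 : ℝ)))
      ((1 : ℝ), (1 : ℝ)) ∧
    ¬ ∃ p ∈ Set.Icc ((0 : ℝ), (0 : ℝ)) ((1 : ℝ), (1 : ℝ)),
        g p = ((1 : ℝ), (1 : ℝ)) := by
  obtain rfl : g = fun p => (p.1, 1 - p.1) := funext hg
  have hmaps : MapsTo (fun p : ℝ × ℝ => (p.1, 1 - p.1)) (Icc 0 1) (Icc 0 1) :=
    mapsTo_fst_one_sub_Icc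
  have hsup : ((1 : ℝ), (0 : ℝ)) ⊔ (0, 1) = 1 := by norm_num [Prod.sup_def]
  refine ⟨by fun_prop, ⟨0, 1, fun p hp => hmaps hp⟩, ?_, fun ⟨p, _, hp⟩ => fst_one_sub_ne_one p.1 hp⟩
  change IsLUB _ 1
  rw [← hsup]
  refine isLUB_sup_of_mem_of_subset_Iic ⟨1, ⟨zero_le_one, le_rfl⟩, by norm_num⟩
    ⟨0, ⟨le_rfl, zero_le_one⟩, by norm_num⟩ ?_
  rw [hsup, image_subset_iff]
  exact fun p hp => (hmaps hp).2
end
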